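/- arXiv:1008.4296 — 3 statements merged into one kernel-verified Lean document; each statement's English description precedes it below -/
import Mathlib

section
/- Suppose φ ∈ L¹(ℝ) ∩ L²(ℝ) and there exists m > 0 such that ∑_{k∈ℤ} |φ̂(ξ + k)|² ≥ m for almost every ξ. If additionally φ̂(ξ)·φ̂(ξ + k) = 0 for almost every ξ and every nonzero integer k, then a contradiction follows; in other words, no integrable φ can satisfy both conditions simultaneously. -/
open MeasureTheory
open scoped FourierTransform

/-- No integrable, square-integrable `φ` can simultaneously have its Fourier periodization
bounded below a.e. by a positive constant and satisfy `φ̂(ξ)·φ̂(ξ+k) = 0` a.e. for all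
nonzero integers `k`. -/
theorem no_integrable_generator_of_translation_invariant
    (φ : ℝ → ℂ) (hφ1 : Integrable φ (volume : Measure ℝ))
    (hφ2 : MemLp φ 2 (volume : Measure ℝ))
    (m : ℝ) (hm : 0 < m)
    (hlow : ∀ᵐ ξ : ℝ ∂(volume : Measure ℝ), m ≤ ∑' k : ℤ, ‖𝓕 φ (ξ + k)‖ ^ 2)
    (horth : ∀ k : ℤ, k ≠ 0 →
      ∀ᵐ ξ : ℝ ∂(volume : Measure ℝ), 𝓕 φ ξ * 𝓕 φ (ξ + k) = 0) :
    False := by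
  set g : ℝ → ℂ := 𝓕 φ with hg
  -- continuity of the Fourier transform
  have hcont : Continuous g :=
    VectorFourier.fourierIntegral_continuous Real.continuous_fourierChar
      (by exact continuous_inner) hφ1
  -- upgrade the orthogonality relation to everywhere
  have horth' : ∀ k : ℤ, k ≠ 0 → ∀ ξ : ℝ, g ξ * g (ξ + k) = 0 := by
    intro k hk
    have h := horth k hk
    have hcl : IsClosed {ξ : ℝ | g ξ * g (ξ + k) = 0} :=
      isClosed_eq (hcont.mul (hcont.comp (continuous_id.add continuous_const))) continuous_const
    have : {ξ : ℝ | g ξ * g (ξ + k) = 0} = Set.univ := by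
      rw [← hcl.ae_eq_univ_iff_eq (μ := volume)]
      rw [Filter.eventuallyEq_univ]
      exact h
    intro ξ
    have := this ▸ Set.mem_univ ξ
    simpa using (this : ξ ∈ {ξ : ℝ | g ξ * g (ξ + k) = 0})
  -- pairwise: distinct integer translates cannot both be nonzero
  have hpair : ∀ (ξ : ℝ) (j k : ℤ), j ≠ k → g (ξ + j) ≠ 0 → g (ξ + k) = 0 := by
    intro ξ j k hjk hj
    have h := horth' (k - j) (sub_ne_zero.mpr (Ne.symm hjk)) (ξ + j)
    have hk : (ξ + j) + ((k - j : ℤ) : ℝ) = ξ + k := by push_cast; ring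
    rw [hk] at h
    rcases mul_eq_zero.mp h with h | h
    · exact absurd h hj
    · exact h
  -- a.e. there is a translate with norm² ≥ m
  have hae : ∀ᵐ ξ : ℝ ∂(volume : Measure ℝ), ∃ k : ℤ, m ≤ ‖g (ξ + k)‖ ^ 2 := by
    filter_upwards [hlow] with ξ hξ
    by_contra hnone
    push_neg at hnone
    by_cases hall : ∀ k : ℤ, g (ξ + k) = 0
    · have : (∑' k : ℤ, ‖g (ξ + k)‖ ^ 2) = 0 := by
        simp [hall]
      rw [this] at hξ; linarith
    · push_neg at hall
      obtain ⟨k₀, hk₀⟩ := hall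
      have hsum : (∑' k : ℤ, ‖g (ξ + k)‖ ^ 2) = ‖g (ξ + k₀)‖ ^ 2 := by
        apply tsum_eq_single
        intro j hj
        rw [hpair ξ k₀ j (Ne.symm hj) hk₀]
        simp
      rw [hsum] at hξ
      exact absurd hξ (not_le.mpr (hnone k₀))
  -- Riemann-Lebesgue: the set E is bounded
  have hRL : Filter.Tendsto g (Filter.cocompact ℝ) (nhds 0) :=
    Real.zero_at_infty_fourier φ
  set E : Set ℝ := {η | m ≤ ‖g η‖ ^ 2} with hE
  have hEclosed : IsClosed E :=
    isClosed_le continuous_const ((hcont.norm).pow 2)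
  obtain ⟨R, hR, hRbound⟩ : ∃ R : ℝ, 0 < R ∧ ∀ η ∈ E, |η| ≤ R := by
    have hsmall : ∀ᶠ η in Filter.cocompact ℝ, ‖g η‖ ^ 2 < m := by
      have : ∀ᶠ η in Filter.cocompact ℝ, ‖g η‖ < Real.sqrt m := by
        have := hRL.norm
        simp only [norm_zero] at this
        exact this.eventually_lt_const (by positivity)
      filter_upwards [this] with η hη
      calc ‖g η‖ ^ 2 < Real.sqrt m ^ 2 := by
            apply pow_lt_pow_left₀ hη (norm_nonneg _)
            norm_num
        _ = m := Real.sq_sqrt hm.le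
    obtain ⟨K, hK, hKsub⟩ := Filter.mem_cocompact.mp (Filter.eventually_iff.mp hsmall)
    obtain ⟨R, hRK⟩ := hK.isBounded.subset_closedBall 0
    refine ⟨max R 1, lt_of_lt_of_le one_pos (le_max_right _ _), fun η hη => ?_⟩
    by_contra habs
    push_neg at habs
    have hηK : η ∉ K := by
      intro hmem
      have := hRK hmem
      rw [Metric.mem_closedBall, Real.dist_eq, sub_zero] at this
      exact absurd (this.trans (le_max_left R 1)) (not_le.mpr habs)
    have h2 : ‖g η‖ ^ 2 < m := hKsub hηK
    have h3 : m ≤ ‖g η‖ ^ 2 := hη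
    linarith
  -- the set F of ξ admitting a good translate
  set F : Set ℝ := {ξ | ∃ k : ℤ, ξ + k ∈ E} with hF
  -- F is closed
  have hFclosed : IsClosed F := by
    rw [← isOpen_compl_iff]
    rw [Metric.isOpen_iff]
    intro ξ hξ
    set S : Finset ℤ := Finset.Icc (⌊-R - ξ⌋ - 1) (⌈R - ξ⌉ + 1) with hS
    have hCclosed : IsClosed (⋃ k ∈ S, {ξ' : ℝ | ξ' + k ∈ E}) := by
      apply Set.Finite.isClosed_biUnion (Finset.finite_toSet S)
      intro k _
      exact hEclosed.preimage (continuous_id.add continuous_const)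
    have hξC : ξ ∈ (⋃ k ∈ S, {ξ' : ℝ | ξ' + k ∈ E})ᶜ := by
      intro hmem
      simp only [Set.mem_iUnion] at hmem
      obtain ⟨k, _, hk⟩ := hmem
      exact hξ ⟨k, hk⟩
    obtain ⟨ε, hε, hball⟩ := Metric.isOpen_iff.mp hCclosed.isOpen_compl ξ hξC
    refine ⟨min ε 1, lt_min hε one_pos, fun ξ' hξ' => ?_⟩
    rw [Metric.mem_ball, Real.dist_eq] at hξ'
    intro hξ'F
    obtain ⟨k, hk⟩ := hξ'F
    have hkabs : |ξ' + (k : ℝ)| ≤ R := hRbound _ hk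
    have h1 : |ξ' - ξ| < 1 := lt_of_lt_of_le hξ' (min_le_right _ _)
    have hkS : k ∈ S := by
      rw [hS, Finset.mem_Icc]
      have hlb : -R - ξ' ≤ (k : ℝ) := by
        have := abs_le.mp hkabs
        linarith [this.1]
      have hub : (k : ℝ) ≤ R - ξ' := by
        have := abs_le.mp hkabs
        linarith [this.2]
      have h1' := abs_lt.mp h1
      constructor
      · have : ((⌊-R - ξ⌋ - 1 : ℤ) : ℝ) ≤ (k : ℝ) := by
          push_cast
          have := Int.floor_le (-R - ξ)
          linarith [h1'.1, h1'.2]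
        exact_mod_cast this
      · have : (k : ℝ) ≤ ((⌈R - ξ⌉ + 1 : ℤ) : ℝ) := by
          push_cast
          have := Int.le_ceil (R - ξ)
          linarith [h1'.1, h1'.2]
        exact_mod_cast this
    have hξ'C : ξ' ∈ ⋃ k ∈ S, {ξ'' : ℝ | ξ'' + k ∈ E} := by
      simp only [Set.mem_iUnion]
      exact ⟨k, hkS, hk⟩
    exact hball (Metric.mem_ball.mpr (by rw [Real.dist_eq]; exact lt_of_lt_of_le hξ' (min_le_left _ _))) hξ'C
  -- F has full measure, hence F = univ
  have hFuniv : F = Set.univ := by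
    rw [← hFclosed.ae_eq_univ_iff_eq (μ := volume), Filter.eventuallyEq_univ]
    filter_upwards [hae] with ξ hξ
    obtain ⟨k, hk⟩ := hξ
    exact ⟨k, hk⟩
  -- F nonempty gives some k₀; the set A = {ξ | ξ + k₀ ∈ E} is clopen
  have h0F : (0 : ℝ) ∈ F := by rw [hFuniv]; trivial
  obtain ⟨k₀, hk₀⟩ : ∃ k : ℤ, (0 : ℝ) + k ∈ E := h0F
  set A : Set ℝ := {ξ | ξ + (k₀ : ℝ) ∈ E} with hA
  have hAclosed : IsClosed A := hEclosed.preimage (continuous_id.add continuous_const)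
  have hAV : A = {ξ : ℝ | g (ξ + k₀) ≠ 0} := by
    ext ξ
    constructor
    · intro hξ
      have : m ≤ ‖g (ξ + k₀)‖ ^ 2 := hξ
      intro h0
      rw [h0] at this
      simp at this
      linarith
    · intro hξ
      have hξF : ξ ∈ F := by rw [hFuniv]; trivial
      obtain ⟨k, hk⟩ := hξF
      rcases eq_or_ne k k₀ with rfl | hne
      · exact hk
      · exfalso
        apply hξ
        exact hpair ξ k k₀ hne (fun h0 => by rw [hE] at hk; simp only [Set.mem_setOf_eq, h0] at hk; simp at hk; linarith) 
  have hAopen : IsOpen A := by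
    rw [hAV]
    exact isOpen_compl_iff.mpr (isClosed_eq (hcont.comp (continuous_id.add continuous_const)) continuous_const)
  have hAuniv : A = Set.univ := by
    have : IsClopen A := ⟨hAclosed, hAopen⟩
    rcases isClopen_iff.mp this with h | h
    · exfalso
      have : (0 : ℝ) ∈ A := hk₀
      rw [h] at this
      exact this
    · exact h
  -- hence ‖g‖² ≥ m everywhere, contradicting Riemann–Lebesgue
  have hall : ∀ η : ℝ, m ≤ ‖g η‖ ^ 2 := by
    intro η
    have : (η - (k₀ : ℝ)) ∈ A := by rw [hAuniv]; trivial
    have h := this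
    rw [hA] at h
    simpa [hE] using h
  have hsmall : ∀ᶠ η in Filter.cocompact ℝ, ‖g η‖ ^ 2 < m := by
    have : ∀ᶠ η in Filter.cocompact ℝ, ‖g η‖ < Real.sqrt m := by
      have := hRL.norm
      simp only [norm_zero] at this
      exact this.eventually_lt_const (by positivity)
    filter_upwards [this] with η hη
    calc ‖g η‖ ^ 2 < Real.sqrt m ^ 2 := by
          apply pow_lt_pow_left₀ hη (norm_nonneg _)
          norm_num
      _ = m := Real.sq_sqrt hm.le
  obtain ⟨η, hη⟩ := hsmall.exists
  exact absurd (hall η) (not_le.mpr hη)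
end

section
/- Let 𝒪 ⊆ ℝ be an open set such that (𝒪 + j) ∩ (𝒪 + k) has Lebesgue measure zero for all distinct integers j, k. Then there exists ξ₀ ∈ ℝ such that ξ₀ + k ∉ 𝒪 for every integer k. -/
open MeasureTheory

/-- If `𝒪 ⊆ ℝ` is open and its integer translates pairwise intersect in Lebesgue-null
sets, then some full integer orbit `ξ₀ + ℤ` misses `𝒪`. -/
theorem exists_orbit_avoiding_open_set (O : Set ℝ) (hO : IsOpen O)
    (hdisj : ∀ j k : ℤ, j ≠ k →
      volume (((fun x => x + (j : ℝ)) '' O) ∩ ((fun x => x + (k : ℝ)) '' O)) = 0) :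
    ∃ ξ₀ : ℝ, ∀ k : ℤ, ξ₀ + (k : ℝ) ∉ O := by
  by_contra h
  push_neg at h
  have hne : O.Nonempty := by
    obtain ⟨k, hk⟩ := h 0
    exact ⟨0 + (k : ℝ), hk⟩
  have hOne : O ≠ Set.univ := by
    intro hU
    have h01 := hdisj 0 1 (by norm_num)
    rw [hU] at h01
    have himg : ∀ c : ℝ, (fun x => x + c) '' (Set.univ : Set ℝ) = Set.univ := by
      intro c
      rw [Set.image_univ]
      exact Set.range_eq_univ.mpr fun y => ⟨y - c, by ring⟩
    rw [himg, himg, Set.univ_inter] at h01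
    simpa using h01
  have hfr : (frontier O).Nonempty := by
    rw [Set.nonempty_iff_ne_empty]
    intro he
    rcases frontier_eq_empty_iff.mp he with h' | h'
    · exact hne.ne_empty h'
    · exact hOne h'
  obtain ⟨b, hb⟩ := hfr
  rw [hO.frontier_eq] at hb
  obtain ⟨hbcl, hbO⟩ := hb
  obtain ⟨k, hk⟩ := h b
  have hk0 : k ≠ 0 := by
    rintro rfl
    simp at hk
    exact hbO hk
  set j : ℤ := -k with hj
  have hj0 : (j : ℤ) ≠ 0 := by simpa [hj] using hk0
  set V : Set ℝ := (fun x => x + (j : ℝ)) '' O with hV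
  have hVopen : IsOpen V := by
    have : V = (Homeomorph.addRight (j : ℝ)) '' O := rfl
    rw [this, Homeomorph.isOpen_image]
    exact hO
  have hbV : b ∈ V := ⟨b + (k : ℝ), hk, by push_cast [hj]; ring⟩
  have hnonempty : (V ∩ O).Nonempty :=
    mem_closure_iff.mp hbcl V hVopen hbV
  have hpos : 0 < volume (V ∩ O) :=
    (hVopen.inter hO).measure_pos volume hnonempty
  have hzero := hdisj j 0 (by simpa using hj0)
  have hO0 : (fun x => x + ((0 : ℤ) : ℝ)) '' O = O := by
    simp
  rw [hO0] at hzero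
  exact hpos.ne' hzero
end

section
/- Let n ≥ 2 be an integer and let 𝒪₀, 𝒪₁, …, 𝒪_{n−1} ⊆ ℝ be open sets that are pairwise disjoint, satisfy 𝒪_m + n = 𝒪_m for all m, and 𝒪_m + m = 𝒪₀ for all 0 ≤ m ≤ n−1. Then ⋃_{m=0}^{n−1} 𝒪_m ≠ ℝ. -/
/-- Pairwise-disjoint open sets `𝒪₀, …, 𝒪_{n−1} ⊆ ℝ` which are `n`-periodic and with
`𝒪_m + m = 𝒪₀` cannot cover the real line. -/
theorem union_of_periodic_disjoint_open_sets_ne_univ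
    (n : ℕ) (hn : 2 ≤ n) (O : Fin n → Set ℝ)
    (hopen : ∀ m, IsOpen (O m))
    (hdisj : Pairwise fun m m' => Disjoint (O m) (O m'))
    (hper : ∀ m, (fun x => x + (n : ℝ)) '' O m = O m)
    (hshift : ∀ m : Fin n, (fun x => x + (m : ℝ)) '' O m = O ⟨0, by omega⟩) :
    (⋃ m, O m) ≠ Set.univ := by
  intro hcov
  have h0lt : 0 < n := by omega
  -- 0 lies in some O m, hence O 0 is nonempty
  obtain ⟨m, hm⟩ := Set.mem_iUnion.mp (show (0:ℝ) ∈ ⋃ m, O m from hcov.symm ▸ Set.mem_univ 0)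
  have hne0 : (O (⟨0, by omega⟩ : Fin n)).Nonempty := by
    rw [← hshift m]
    exact (Set.Nonempty.image _ ⟨0, hm⟩)
  -- O 1 is nonempty since its image is O 0
  have hne1 : (O (⟨1, by omega⟩ : Fin n)).Nonempty := by
    obtain ⟨y, hy⟩ := hne0
    rw [← hshift ⟨1, by omega⟩] at hy
    obtain ⟨z, hz, -⟩ := hy
    exact ⟨z, hz⟩
  set u := O (⟨0, h0lt⟩ : Fin n) with hu_def
  set v := ⋃ m : Fin n, ⋃ (_ : m ≠ ⟨0, h0lt⟩), O m with hv_def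
  have hv : IsOpen v := isOpen_iUnion fun m => isOpen_iUnion fun _ => hopen m
  have hcover : (Set.univ : Set ℝ) ⊆ u ∪ v := by
    intro x _
    obtain ⟨k, hk⟩ := Set.mem_iUnion.mp (show x ∈ ⋃ m, O m from hcov.symm ▸ Set.mem_univ x)
    by_cases h : k = ⟨0, h0lt⟩
    · left; rwa [h] at hk
    · right; exact Set.mem_iUnion.mpr ⟨k, Set.mem_iUnion.mpr ⟨h, hk⟩⟩
  have hsu : (Set.univ ∩ u).Nonempty := by
    obtain ⟨y, hy⟩ := hne0
    exact ⟨y, Set.mem_univ y, hy⟩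
  have hsv : (Set.univ ∩ v).Nonempty := by
    obtain ⟨y, hy⟩ := hne1
    refine ⟨y, Set.mem_univ y, Set.mem_iUnion.mpr ⟨⟨1, by omega⟩,
      Set.mem_iUnion.mpr ⟨?_, hy⟩⟩⟩
    intro h
    have := congrArg Fin.val h
    simp at this
  obtain ⟨x, -, hxu, hxv⟩ :=
    isPreconnected_univ u v (hopen _) hv hcover hsu hsv
  obtain ⟨k, hk⟩ := Set.mem_iUnion.mp hxv
  obtain ⟨hkne, hxk⟩ := Set.mem_iUnion.mp hk
  exact Set.disjoint_left.mp (hdisj (Ne.symm hkne)) hxu hxk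
end
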